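/- arXiv:1507.06840 — 2 statements merged into one kernel-verified Lean document; each statement's English description precedes it below -/
import Mathlib

section
/- Let Z be a topologically ordered *-space, p an increasing continuous seminorm on Z, and E a VE-space over Z. Then the map p̃(h) = p([h,h])^{1/2} is a seminorm on E, i.e., it additionally satisfies the triangle inequality p̃(h+k) ≤ p̃(h) + p̃(k). -/
/-!
Write `h + k = t (t⁻¹ h) + (1 - t) ((1 - t)⁻¹ k)` for `0 < t < 1`. Convexity of `h ↦ [h, h]`
(its defect is `t (1 - t) [h - k, h - k] ≥ 0`) gives `[h + k, h + k] ≤ [h, h] / t + [k, k] / (1 - t)`,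
and since `p` is increasing and subadditive, `p [h + k, h + k] ≤ a² / t + b² / (1 - t)` with
`a = p̃ h`, `b = p̃ k`. Taking `t` close to `a / (a + b)` makes the right-hand side close to
`(a + b)²`.
-/

/-- An ordered *-space: a complex vector space with a conjugate-linear involution
and a strict cone of selfadjoint elements. The order is `x ≤ y ↔ y - x ∈ pos`. -/
structure OrderedStarSpace (Z : Type*) [AddCommGroup Z] [Module ℂ Z] where
  star : Z → Z
  star_add : ∀ x y : Z, star (x + y) = star x + star y
  star_smul : ∀ (c : ℂ) (x : Z), star (c • x) = (starRingEnd ℂ) c • star x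
  star_involutive : ∀ x : Z, star (star x) = x
  pos : Set Z
  pos_add : ∀ x ∈ pos, ∀ y ∈ pos, x + y ∈ pos
  pos_smul : ∀ (r : ℝ), 0 ≤ r → ∀ x ∈ pos, (r : ℂ) • x ∈ pos
  pos_strict : ∀ x ∈ pos, -x ∈ pos → x = 0
  pos_selfadjoint : ∀ x ∈ pos, star x = x

/-- A `Z`-valued gramian making `E` a VE-space over the ordered *-space `Z`. -/
structure VEGramian {Z : Type*} [AddCommGroup Z] [Module ℂ Z]
    (O : OrderedStarSpace Z) (E : Type*) [AddCommGroup E] [Module ℂ E] where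
  ip : E → E → Z
  add_right : ∀ x y z : E, ip x (y + z) = ip x y + ip x z
  smul_right : ∀ (c : ℂ) (x y : E), ip x (c • y) = c • ip x y
  herm : ∀ x y : E, ip x y = O.star (ip y x)
  ip_pos : ∀ x : E, ip x x ∈ O.pos
  definite : ∀ x : E, ip x x = 0 → x = 0

/-- An increasing seminorm on the ordered *-space `Z`. -/
structure IncSeminorm {Z : Type*} [AddCommGroup Z] [Module ℂ Z]
    (O : OrderedStarSpace Z) where
  p : Z → ℝ
  nonneg : ∀ x : Z, 0 ≤ p x
  add_le : ∀ x y : Z, p (x + y) ≤ p x + p y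
  smul : ∀ (c : ℂ) (x : Z), p (c • x) = ‖c‖ * p x
  mono : ∀ x y : Z, x ∈ O.pos → y - x ∈ O.pos → p x ≤ p y

def OrderedStarSpace.Le {Z : Type*} [AddCommGroup Z] [Module ℂ Z] (O : OrderedStarSpace Z)
    (x y : Z) : Prop :=
  y - x ∈ O.pos

namespace VEGramian

variable {Z E : Type*} [AddCommGroup Z] [Module ℂ Z] [AddCommGroup E] [Module ℂ E]
  {O : OrderedStarSpace Z} (G : VEGramian O E)

lemma ip_add_left (x y z : E) : G.ip (x + y) z = G.ip x z + G.ip y z := by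
  rw [G.herm (x + y) z, G.add_right, O.star_add, ← G.herm, ← G.herm]

lemma ip_smul_left (c : ℂ) (x y : E) : G.ip (c • x) y = (starRingEnd ℂ) c • G.ip x y := by
  rw [G.herm (c • x) y, G.smul_right, O.star_smul, ← G.herm]

lemma ip_ofReal_smul_left (r : ℝ) (x y : E) : G.ip ((r : ℂ) • x) y = (r : ℂ) • G.ip x y := by
  rw [G.ip_smul_left, Complex.conj_ofReal]

lemma ip_sub_left (x y z : E) : G.ip (x - y) z = G.ip x z - G.ip y z :=
  eq_sub_of_add_eq (by rw [← G.ip_add_left, sub_add_cancel])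

lemma ip_sub_right (x y z : E) : G.ip x (y - z) = G.ip x y - G.ip x z :=
  eq_sub_of_add_eq (by rw [← G.add_right, sub_add_cancel])

lemma ip_self_smul_add_smul_le (h k : E) {t : ℝ} (ht₀ : 0 ≤ t) (ht₁ : t ≤ 1) :
    O.Le (G.ip ((t : ℂ) • h + ((1 - t : ℝ) : ℂ) • k) ((t : ℂ) • h + ((1 - t : ℝ) : ℂ) • k))
      ((t : ℂ) • G.ip h h + ((1 - t : ℝ) : ℂ) • G.ip k k) := by
  have defect : (t : ℂ) • G.ip h h + ((1 - t : ℝ) : ℂ) • G.ip k k -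
      G.ip ((t : ℂ) • h + ((1 - t : ℝ) : ℂ) • k) ((t : ℂ) • h + ((1 - t : ℝ) : ℂ) • k) =
      ((t * (1 - t) : ℝ) : ℂ) • G.ip (h - k) (h - k) := by
    simp only [G.ip_add_left, G.add_right, G.ip_ofReal_smul_left, G.smul_right, G.ip_sub_left,
      G.ip_sub_right]
    push_cast
    module
  rw [OrderedStarSpace.Le, defect]
  exact O.pos_smul _ (mul_nonneg ht₀ (sub_nonneg.2 ht₁)) _ (G.ip_pos _)

lemma ip_ofReal_smul_self (r : ℝ) (x : E) :
    G.ip ((r : ℂ) • x) ((r : ℂ) • x) = ((r ^ 2 : ℝ) : ℂ) • G.ip x x := by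
  rw [G.ip_ofReal_smul_left, G.smul_right, smul_smul, sq, Complex.ofReal_mul]

lemma ip_self_add_le (h k : E) {t : ℝ} (ht₀ : 0 < t) (ht₁ : t < 1) :
    O.Le (G.ip (h + k) (h + k))
      (((t⁻¹ : ℝ) : ℂ) • G.ip h h + (((1 - t)⁻¹ : ℝ) : ℂ) • G.ip k k) := by
  have hs : 0 < 1 - t := sub_pos.2 ht₁
  have split : h + k =
      (t : ℂ) • ((t⁻¹ : ℝ) : ℂ) • h + ((1 - t : ℝ) : ℂ) • (((1 - t)⁻¹ : ℝ) : ℂ) • k := by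
    rw [smul_smul, smul_smul, ← Complex.ofReal_mul, ← Complex.ofReal_mul, mul_inv_cancel₀ ht₀.ne',
      mul_inv_cancel₀ hs.ne', Complex.ofReal_one, one_smul, one_smul]
  have convex := G.ip_self_smul_add_smul_le (((t⁻¹ : ℝ) : ℂ) • h)
    ((((1 - t)⁻¹ : ℝ) : ℂ) • k) ht₀.le ht₁.le
  rw [← split, G.ip_ofReal_smul_self, G.ip_ofReal_smul_self, smul_smul, smul_smul,
    ← Complex.ofReal_mul, ← Complex.ofReal_mul] at convex
  convert convex using 5 <;> field_simp

end VEGramian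

namespace IncSeminorm

variable {Z : Type*} [AddCommGroup Z] [Module ℂ Z] {O : OrderedStarSpace Z} (N : IncSeminorm O)

lemma map_ofReal_smul {r : ℝ} (hr : 0 ≤ r) (x : Z) : N.p ((r : ℂ) • x) = r * N.p x := by
  rw [N.smul, Complex.norm_real, Real.norm_of_nonneg hr]

lemma map_ip_self_add_le {E : Type*} [AddCommGroup E] [Module ℂ E] (G : VEGramian O E)
    (h k : E) {t : ℝ} (ht₀ : 0 < t) (ht₁ : t < 1) :
    N.p (G.ip (h + k) (h + k)) ≤ N.p (G.ip h h) / t + N.p (G.ip k k) / (1 - t) := by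
  have hs : 0 < 1 - t := sub_pos.2 ht₁
  calc N.p (G.ip (h + k) (h + k))
      ≤ N.p (((t⁻¹ : ℝ) : ℂ) • G.ip h h + (((1 - t)⁻¹ : ℝ) : ℂ) • G.ip k k) :=
        N.mono _ _ (G.ip_pos _) (G.ip_self_add_le h k ht₀ ht₁)
    _ ≤ N.p (((t⁻¹ : ℝ) : ℂ) • G.ip h h) + N.p ((((1 - t)⁻¹ : ℝ) : ℂ) • G.ip k k) := N.add_le _ _
    _ = N.p (G.ip h h) / t + N.p (G.ip k k) / (1 - t) := by
        rw [N.map_ofReal_smul (inv_nonneg.2 ht₀.le), N.map_ofReal_smul (inv_nonneg.2 hs.le),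
          inv_mul_eq_div, inv_mul_eq_div]

end IncSeminorm

open Filter Topology in
lemma le_add_sq_of_forall_le_div_add_div {s a b : ℝ} (ha : 0 ≤ a) (hb : 0 ≤ b)
    (hs : ∀ t, 0 < t → t < 1 → s ≤ a ^ 2 / t + b ^ 2 / (1 - t)) : s ≤ (a + b) ^ 2 := by
  have near : ∀ ε > 0, s ≤ (a + b) * (a + b + 2 * ε) := by
    intro ε hε
    set c := a + b + 2 * ε
    have hc : 0 < c := by positivity
    have hcompl : 1 - (a + ε) / c = (b + ε) / c := by field_simp; ring
    -- the minimiser `a / (a + b)` of the right-hand side, shifted by `ε` to stay inside `(0, 1)`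
    have bound := hs ((a + ε) / c) (by positivity) ((div_lt_one hc).2 (by linarith))
    rw [hcompl, div_div_eq_mul_div, div_div_eq_mul_div] at bound
    have hA : a ^ 2 * c / (a + ε) ≤ a * c := by
      rw [div_le_iff₀ (by positivity)]; nlinarith [mul_nonneg (mul_nonneg ha hc.le) hε.le]
    have hB : b ^ 2 * c / (b + ε) ≤ b * c := by
      rw [div_le_iff₀ (by positivity)]; nlinarith [mul_nonneg (mul_nonneg hb hc.le) hε.le]
    linarith
  have limit : Tendsto (fun ε => (a + b) * (a + b + 2 * ε)) (𝓝[>] 0) (𝓝 ((a + b) ^ 2)) := by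
    have : Continuous fun ε : ℝ => (a + b) * (a + b + 2 * ε) := by fun_prop
    simpa [sq] using (this.tendsto 0).mono_left nhdsWithin_le_nhds
  exact ge_of_tendsto limit (eventually_nhdsWithin_of_forall near)

theorem seminorm_of_gramian_triangle_general {Z E : Type*} [AddCommGroup Z] [Module ℂ Z]
    [AddCommGroup E] [Module ℂ E]
    (O : OrderedStarSpace Z) (N : IncSeminorm O)
    (G : VEGramian O E) :
    ∀ h k : E, Real.sqrt (N.p (G.ip (h + k) (h + k))) ≤
      Real.sqrt (N.p (G.ip h h)) + Real.sqrt (N.p (G.ip k k)) := by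
  intro h k
  refine (Real.sqrt_le_left (by positivity)).2 (le_add_sq_of_forall_le_div_add_div
    (Real.sqrt_nonneg _) (Real.sqrt_nonneg _) fun t ht₀ ht₁ => ?_)
  rw [Real.sq_sqrt (N.nonneg _), Real.sq_sqrt (N.nonneg _)]
  exact N.map_ip_self_add_le G h k ht₀ ht₁

/-- for an increasing continuous seminorm `p` on a topologically
ordered *-space `Z` and a VE-space `E` over `Z`, the map `p̃(h) = p([h,h])^{1/2}`
satisfies the triangle inequality, hence it is a seminorm on `E`. -/
theorem seminorm_of_gramian_triangle {Z E : Type*} [AddCommGroup Z] [Module ℂ Z]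
    [TopologicalSpace Z] [AddCommGroup E] [Module ℂ E]
    (O : OrderedStarSpace Z) (N : IncSeminorm O) (hcont : Continuous N.p)
    (G : VEGramian O E) :
    ∀ h k : E, Real.sqrt (N.p (G.ip (h + k) (h + k))) ≤
      Real.sqrt (N.p (G.ip h h)) + Real.sqrt (N.p (G.ip k k)) :=
  seminorm_of_gramian_triangle_general O N G
end

section
/- Let A be a C*-algebra, H a Hilbert C*-module over A, X a nonempty set, and k : X × X → L*(H) a positive semidefinite kernel. Then for every x ∈ X there exists a constant c(x) ≥ 0 such that for all n ∈ ℕ, y₁,…,y_n ∈ X, and h₁,…,h_n ∈ H, ‖Σ_{i,j=1}^{n} [k(x,y_i)h_i, k(x,y_j)h_j]‖ ≤ c(x) · ‖Σ_{i,j=1}^{n} [k(y_j,y_i)h_i, h_j]‖. -/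
/-!
Put `v = ∑ᵢ k(x,yᵢ)hᵢ` and `D = ∑ᵢⱼ [k(yᵢ,yⱼ)hⱼ, hᵢ]`. Positivity of the kernel at the points
`x, y₁, …, yₙ` with vectors `c • v, h₁, …, hₙ` gives
`0 ≤ |c|² [k(x,x)v, v] + c [v, v] + c̄ R + D` for every `c : ℂ`, where
`R = ∑ᵢ [k(yᵢ,x)v, hᵢ]`. Self-adjointness of the right
side for `c = ±1, ±i` forces `R = [v, v]`, and `c = -t` then gives
`2t [v, v] ≤ t² [k(x,x)v, v] + D` in `A`. Since `k(x,x)` has an adjoint it is bounded by the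
closed graph theorem, so taking norms with `t = 1 / (‖k(x,x)‖ + 1)` yields
`‖[v, v]‖ ≤ (‖k(x,x)‖ + 1) ‖D‖`.
-/
open scoped InnerProductSpace
open Filter Topology

theorem eq_star_of_forall_isSelfAdjoint {M : Type*} [AddCommGroup M] [StarAddMonoid M]
    [Module ℂ M] [StarModule ℂ M] {P Q R D : M}
    (h : ∀ c : ℂ, IsSelfAdjoint ((star c * c) • P + c • Q + star c • R + D)) :
    R = star Q := by
  have h₁ := (h 1).star_eq
  have h₂ := (h (-1)).star_eq
  have h₃ := (h Complex.I).star_eq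
  have h₄ := (h (-Complex.I)).star_eq
  simp only [star_add, star_smul, star_one, star_neg, Complex.star_def, Complex.conj_I, neg_neg,
    neg_mul, mul_neg, Complex.I_mul_I, one_mul] at h₁ h₂ h₃ h₄
  linear_combination (norm := skip)
    (-1 / 4 : ℂ) • h₁ + (1 / 4 : ℂ) • h₂ + (-Complex.I / 4) • h₃ + (Complex.I / 4) • h₄
  match_scalars <;> ring_nf <;> simp [Complex.I_sq]

theorem CStarAlgebra.norm_le_mul_norm_of_forall_two_smul_le {B : Type*} [NonUnitalCStarAlgebra B]
    [PartialOrder B] [StarOrderedRing B] {P Q D : B} {M : ℝ} (hM : 0 < M) (hQ : 0 ≤ Q)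
    (hP : ‖P‖ ≤ M * ‖Q‖) (h : ∀ t : ℝ, (2 * t) • Q ≤ t ^ 2 • P + D) : ‖Q‖ ≤ M * ‖D‖ := by
  have ht : (0 : ℝ) ≤ 2 * M⁻¹ := by positivity
  have hnorm : 2 * M⁻¹ * ‖Q‖ ≤ M⁻¹ ^ 2 * ‖P‖ + ‖D‖ :=
    calc 2 * M⁻¹ * ‖Q‖ = ‖(2 * M⁻¹) • Q‖ := by rw [norm_smul, Real.norm_of_nonneg ht]
      _ ≤ ‖M⁻¹ ^ 2 • P + D‖ := norm_le_norm_of_nonneg_of_le (smul_nonneg ht hQ) (h _)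
      _ ≤ M⁻¹ ^ 2 * ‖P‖ + ‖D‖ := by
        grw [norm_add_le, norm_smul, Real.norm_of_nonneg (by positivity)]
  have hP' : M⁻¹ ^ 2 * ‖P‖ ≤ M⁻¹ * ‖Q‖ := by
    grw [hP]
    exact le_of_eq (by field_simp)
  rw [← inv_mul_le_iff₀ hM]
  linarith

namespace CStarModule

variable {B E : Type*} [NonUnitalCStarAlgebra B] [PartialOrder B] [StarOrderedRing B] [SMul B E]
  [NormedAddCommGroup E] [NormedSpace ℂ E] [CStarModule B E]

theorem _root_.Filter.Tendsto.cstarInner {α : Type*} {l : Filter α} {f g : α → E} {x y : E}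
    (hf : Tendsto f l (𝓝 x)) (hg : Tendsto g l (𝓝 y)) :
    Tendsto (fun a => ⟪f a, g a⟫_B) l (𝓝 ⟪x, y⟫_B) :=
  (continuous_inner.tendsto (x, y)).comp (hf.prodMk_nhds hg)

/-- Hellinger–Toeplitz for Hilbert C⋆-modules, via the closed graph theorem. -/
theorem continuous_of_adjoint [CompleteSpace E] {T S : E →ₗ[ℂ] E}
    (hTS : ∀ v w, ⟪T v, w⟫_B = ⟪v, S w⟫_B) : Continuous T := by
  refine T.continuous_of_seq_closed_graph fun u x y hu hTu => ?_
  rw [← sub_eq_zero, ← inner_self (A := B)]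
  have hlhs : ∀ n, ⟪T (u n) - T x, y - T x⟫_B = ⟪u n - x, S (y - T x)⟫_B := fun n => by
    rw [← T.map_sub, hTS]
  refine tendsto_nhds_unique ((hTu.sub_const _).cstarInner tendsto_const_nhds) ?_
  simp_rw [Function.comp_apply, hlhs]
  rw [← inner_zero_left (A := B) (x := S (y - T x))]
  exact ((sub_self x) ▸ hu.sub_const x).cstarInner tendsto_const_nhds

end CStarModule

def IsPosSemidefKernel (B : Type*) {E X : Type*} [AddCommMonoid B] [PartialOrder B]
    [AddCommGroup E] [Module ℂ E] [Inner B E] (k : X → X → E →ₗ[ℂ] E) : Prop :=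
  ∀ (n : ℕ) (x : Fin n → X) (h : Fin n → E), 0 ≤ ∑ i, ∑ j, ⟪k (x i) (x j) (h j), h i⟫_B

namespace IsPosSemidefKernel

section Algebraic

variable {B E X : Type*} [NonUnitalRing B] [StarRing B] [Module ℂ B] [StarModule ℂ B]
  [PartialOrder B] [Norm B] [AddCommGroup E] [Module ℂ E] [SMul B E] [Norm E] [CStarModule B E]
  {k : X → X → E →ₗ[ℂ] E}

theorem zero_le_add_cons (hk : IsPosSemidefKernel B k) (x : X) {n : ℕ} (y : Fin n → X)
    (h : Fin n → E) (v : E) (c : ℂ) :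
    0 ≤ (star c * c) • ⟪k x x v, v⟫_B + c • ⟪∑ j, k x (y j) (h j), v⟫_B +
      star c • ∑ i, ⟪k (y i) x v, h i⟫_B + ∑ i, ∑ j, ⟪k (y i) (y j) (h j), h i⟫_B := by
  refine (hk (n + 1) (Fin.cons x y) (Fin.cons (c • v) h)).trans_eq ?_
  simp only [Fin.sum_univ_succ, Fin.cons_zero, Fin.cons_succ, map_smul,
    CStarModule.inner_smul_left_complex, CStarModule.inner_smul_right_complex,
    CStarModule.inner_sum_left, ← Finset.smul_sum, Finset.sum_add_distrib]
  module

theorem two_smul_inner_self_le [StarOrderedRing B] (hk : IsPosSemidefKernel B k) (x : X) {n : ℕ}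
    (y : Fin n → X) (h : Fin n → E) {v : E} (hv : ∑ j, k x (y j) (h j) = v) (t : ℝ) :
    (2 * t) • ⟪v, v⟫_B ≤ t ^ 2 • ⟪k x x v, v⟫_B + ∑ i, ∑ j, ⟪k (y i) (y j) (h j), h i⟫_B := by
  have hR : ∑ i, ⟪k (y i) x v, h i⟫_B = ⟪v, v⟫_B := by
    have := eq_star_of_forall_isSelfAdjoint fun c => IsSelfAdjoint.of_nonneg
      (hk.zero_le_add_cons x y h v c)
    rwa [CStarModule.star_inner, hv] at this
  have := hk.zero_le_add_cons x y h v (-t)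
  rw [hR, hv] at this
  rw [← sub_nonneg]
  convert this using 1
  simp only [star_neg, Complex.star_def, Complex.conj_ofReal]
  module

end Algebraic

variable {B E X : Type*} [NonUnitalCStarAlgebra B] [PartialOrder B] [StarOrderedRing B] [SMul B E]
  [NormedAddCommGroup E] [NormedSpace ℂ E] [CStarModule B E] {k : X → X → E →ₗ[ℂ] E}

theorem exists_norm_sum_inner_le [CompleteSpace E] (hk : IsPosSemidefKernel B k) {x : X}
    {S : E →ₗ[ℂ] E} (hS : ∀ v w, ⟪k x x v, w⟫_B = ⟪v, S w⟫_B) :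
    ∃ c : ℝ, 0 ≤ c ∧ ∀ (n : ℕ) (y : Fin n → X) (h : Fin n → E),
      ‖∑ i, ∑ j, ⟪k x (y i) (h i), k x (y j) (h j)⟫_B‖ ≤
        c * ‖∑ i, ∑ j, ⟪k (y j) (y i) (h i), h j⟫_B‖ := by
  let T : E →L[ℂ] E := ⟨k x x, CStarModule.continuous_of_adjoint hS⟩
  refine ⟨‖T‖ + 1, by positivity, fun n y h => ?_⟩
  set v := ∑ j, k x (y j) (h j) with hv
  have hP : ‖⟪k x x v, v⟫_B‖ ≤ (‖T‖ + 1) * ‖⟪v, v⟫_B‖ :=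
    calc ‖⟪k x x v, v⟫_B‖ ≤ ‖T v‖ * ‖v‖ := CStarModule.norm_inner_le E
      _ ≤ ‖T‖ * ‖v‖ * ‖v‖ := by grw [T.le_opNorm]
      _ ≤ (‖T‖ + 1) * ‖⟪v, v⟫_B‖ := by
        rw [← CStarModule.norm_sq_eq B]
        nlinarith [norm_nonneg v]
  simp only [← CStarModule.inner_sum_left, ← CStarModule.inner_sum_right, ← hv]
  rw [Finset.sum_comm]
  exact CStarAlgebra.norm_le_mul_norm_of_forall_two_smul_le (by positivity)
    CStarModule.inner_self_nonneg hP (hk.two_smul_inner_self_le x y h hv.symm)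

end IsPosSemidefKernel

open MulOpposite in
/-- `CStarModule` is left-handed, so a right Hilbert `A`-module is recast over `Aᵐᵒᵖ`. -/
abbrev CStarModule.ofRightInner {A H : Type*} [NonUnitalNormedRing A] [StarRing A] [Module ℂ A]
    [PartialOrder A] [AddCommGroup H] [Module ℂ H] [Norm H] [SMul Aᵐᵒᵖ H] (ip : H → H → A)
    (add_right : ∀ x y z : H, ip x (y + z) = ip x y + ip x z)
    (smul_right : ∀ (c : ℂ) (x y : H), ip x (c • y) = c • ip x y)
    (op_smul_right : ∀ (x y : H) (a : Aᵐᵒᵖ), ip x (a • y) = ip x y * unop a)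
    (herm : ∀ x y : H, star (ip x y) = ip y x)
    (ip_pos : ∀ x : H, 0 ≤ ip x x)
    (ip_definite : ∀ x : H, ip x x = 0 → x = 0)
    (norm_eq : ∀ h : H, ‖h‖ = Real.sqrt ‖ip h h‖) : CStarModule Aᵐᵒᵖ H where
  inner x y := op (ip x y)
  inner_add_right := by simp [add_right]
  inner_self_nonneg := op_nonneg.mpr (ip_pos _)
  inner_self {x} := ⟨fun hx => ip_definite x (op_injective hx), fun hx => by
    rw [hx, ← zero_smul ℂ (0 : H), smul_right, zero_smul, op_zero]⟩
  inner_op_smul_right := by simp [op_smul_right]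
  inner_smul_right_complex := by simp [smul_right]
  star_inner x y := by rw [← op_star, herm]
  norm_eq_sqrt_norm_inner_self := norm_eq

theorem psd_kernel_hilbert_module_bound_general
    {A : Type*} [NormedRing A] [StarRing A] [CStarRing A] [NormedAlgebra ℂ A]
    [CompleteSpace A] [StarModule ℂ A] [PartialOrder A] [StarOrderedRing A]
    {H : Type*} [NormedAddCommGroup H] [NormedSpace ℂ H] [CompleteSpace H]
    {X : Type*}
    (sm : H → A → H) (ip : H → H → A)
    (add_right : ∀ x y z : H, ip x (y + z) = ip x y + ip x z)
    (smul_right : ∀ (c : ℂ) (x y : H), ip x (c • y) = c • ip x y)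
    (sm_right : ∀ (x y : H) (a : A), ip x (sm y a) = ip x y * a)
    (herm : ∀ x y : H, star (ip x y) = ip y x)
    (ip_pos : ∀ x : H, 0 ≤ ip x x)
    (ip_definite : ∀ x : H, ip x x = 0 → x = 0)
    (norm_eq : ∀ h : H, ‖h‖ = Real.sqrt ‖ip h h‖)
    (k : X → X → Module.End ℂ H)
    (hadj : ∀ x y : X, ∃ S : Module.End ℂ H,
      ∀ h g : H, ip (k x y h) g = ip h (S g))
    (hpsd : ∀ (n : ℕ) (x : Fin n → X) (h : Fin n → H),
      0 ≤ ∑ i, ∑ j, ip (k (x i) (x j) (h j)) (h i)) :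
    ∀ x : X, ∃ c : ℝ, 0 ≤ c ∧ ∀ (n : ℕ) (y : Fin n → X) (h : Fin n → H),
      ‖∑ i, ∑ j, ip (k x (y i) (h i)) (k x (y j) (h j))‖ ≤
        c * ‖∑ i, ∑ j, ip (k (y j) (y i) (h i)) (h j)‖ := by
  let _ : CStarAlgebra A := { }
  let _ : SMul Aᵐᵒᵖ H := ⟨fun a v => sm v a.unop⟩
  let _ := CStarModule.ofRightInner ip add_right smul_right (fun x y a => sm_right x y a.unop) herm
    ip_pos ip_definite norm_eq
  have hinner : ∀ v w : H, ⟪v, w⟫_Aᵐᵒᵖ = MulOpposite.op (ip v w) := fun _ _ => rfl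
  have hk : IsPosSemidefKernel Aᵐᵒᵖ k := fun n y h => by
    simpa only [hinner, ← Finset.op_sum, MulOpposite.op_nonneg] using hpsd n y h
  intro x
  obtain ⟨S, hS⟩ := hadj x x
  obtain ⟨c, hc, hbound⟩ := hk.exists_norm_sum_inner_le (S := S) fun v w => congrArg _ (hS v w)
  refine ⟨c, hc, fun n y h => ?_⟩
  simpa only [hinner, ← Finset.op_sum, MulOpposite.norm_op] using hbound n y h

/-- for a positive semidefinite kernel `k` with values adjointable
operators on a Hilbert C*-module `H` over a C*-algebra `A`, for every `x` there
is `c(x) ≥ 0` such that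
`‖Σᵢⱼ [k(x,yᵢ)hᵢ, k(x,yⱼ)hⱼ]‖ ≤ c(x) ‖Σᵢⱼ [k(yⱼ,yᵢ)hᵢ, hⱼ]‖`. -/
theorem psd_kernel_hilbert_module_bound
    {A : Type*} [NormedRing A] [StarRing A] [CStarRing A] [NormedAlgebra ℂ A]
    [CompleteSpace A] [StarModule ℂ A] [PartialOrder A] [StarOrderedRing A]
    {H : Type*} [NormedAddCommGroup H] [NormedSpace ℂ H] [CompleteSpace H]
    {X : Type*} [Nonempty X]
    (sm : H → A → H) (ip : H → H → A)
    (add_right : ∀ x y z : H, ip x (y + z) = ip x y + ip x z)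
    (smul_right : ∀ (c : ℂ) (x y : H), ip x (c • y) = c • ip x y)
    (sm_right : ∀ (x y : H) (a : A), ip x (sm y a) = ip x y * a)
    (herm : ∀ x y : H, star (ip x y) = ip y x)
    (ip_pos : ∀ x : H, 0 ≤ ip x x)
    (ip_definite : ∀ x : H, ip x x = 0 → x = 0)
    (norm_eq : ∀ h : H, ‖h‖ = Real.sqrt ‖ip h h‖)
    (k : X → X → Module.End ℂ H)
    (hadj : ∀ x y : X, ∃ S : Module.End ℂ H,
      ∀ h g : H, ip (k x y h) g = ip h (S g))
    (hpsd : ∀ (n : ℕ) (x : Fin n → X) (h : Fin n → H),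
      0 ≤ ∑ i, ∑ j, ip (k (x i) (x j) (h j)) (h i)) :
    ∀ x : X, ∃ c : ℝ, 0 ≤ c ∧ ∀ (n : ℕ) (y : Fin n → X) (h : Fin n → H),
      ‖∑ i, ∑ j, ip (k x (y i) (h i)) (k x (y j) (h j))‖ ≤
        c * ‖∑ i, ∑ j, ip (k (y j) (y i) (h i)) (h j)‖ :=
  psd_kernel_hilbert_module_bound_general sm ip add_right smul_right sm_right herm ip_pos
    ip_definite norm_eq k hadj hpsd
end
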